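/- arXiv:1306.4384 — 7 statements merged into one kernel-verified Lean document; each statement's English description precedes it below -/
import Mathlib

section
/- Let G=(V,E) be a finite simple graph with positive vertex weights w, let Z ≥ 0, let ε ∈ (0,1), and let P_1, …, P_{k'} (k' ≥ 1) be pairwise disjoint nonempty subsets of V such that φ_G(P_i) ≤ Z for every i. Set k'' = ⌊(1−ε)k'⌋. Then there exists a partition of V into k''+1 nonempty sets each of which has expansion at most Z/ε. (Concretely, one may take the k'' sets P_i of smallest weight together with the complement P' = V ∖ (union of those k'' sets), which satisfies w(P') ≥ ε·w(V) and φ_G(P') ≤ Z/ε.) -/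
open Finset

/-- The set of edges of `G` with exactly one endpoint in `S`. -/
def cutEdges {V : Type*} [Fintype V] [DecidableEq V] (G : SimpleGraph V) [DecidableRel G.Adj]
    (S : Finset V) : Finset (Sym2 V) :=
  G.edgeFinset.filter (fun e => ∃ u ∈ S, ∃ v, v ∉ S ∧ e = s(u, v))

/-- The expansion `φ_G(S) = |E(S, V∖S)| / w(S)` of a set `S`. -/
noncomputable def expansion {V : Type*} [Fintype V] [DecidableEq V] (G : SimpleGraph V)
    [DecidableRel G.Adj] (w : V → ℝ) (S : Finset V) : ℝ :=
  ((cutEdges G S).card : ℝ) / ∑ u ∈ S, w u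

set_option maxHeartbeats 1000000 in
theorem stmt0 {V : Type*} [Fintype V] [DecidableEq V] (G : SimpleGraph V) [DecidableRel G.Adj]
    (w : V → ℝ) (hw : ∀ u, 0 < w u) (Z : ℝ) (hZ : 0 ≤ Z) (ε : ℝ) (hε : ε ∈ Set.Ioo (0 : ℝ) 1)
    (k' : ℕ) (hk' : 1 ≤ k') (P : Fin k' → Finset V)
    (hdisj : ∀ i j, i ≠ j → Disjoint (P i) (P j))
    (hne : ∀ i, (P i).Nonempty)
    (hexp : ∀ i, expansion G w (P i) ≤ Z) :
    ∃ Q : Fin (⌊(1 - ε) * (k' : ℝ)⌋₊ + 1) → Finset V,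
      (∀ i, (Q i).Nonempty) ∧
      (∀ i j, i ≠ j → Disjoint (Q i) (Q j)) ∧
      Finset.univ.biUnion Q = Finset.univ ∧
      (∀ i, expansion G w (Q i) ≤ Z / ε) := by
  obtain ⟨hε0, hε1⟩ := hε
  set k'' := ⌊(1 - ε) * (k' : ℝ)⌋₊ with hk''def
  have hk'pos : (0 : ℝ) < k' := by exact_mod_cast hk'
  have hk''lt : k'' < k' := by
    rw [hk''def]
    rw [Nat.floor_lt (by nlinarith)]
    nlinarith
  have hk''le : (k'' : ℝ) ≤ (1 - ε) * k' := Nat.floor_le (by nlinarith)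
  -- weights of parts
  set wP : Fin k' → ℝ := fun i => ∑ u ∈ P i, w u with hwPdef
  have hwP : ∀ i, 0 < wP i := fun i => Finset.sum_pos (fun u _ => hw u) (hne i)
  have hcutle : ∀ i, ((cutEdges G (P i)).card : ℝ) ≤ Z * wP i := by
    intro i
    have h := hexp i
    rw [expansion, div_le_iff₀ (hwP i)] at h
    linarith [h]
  set σ := Tuple.sort wP with hσdef
  have hmono : Monotone (wP ∘ σ) := Tuple.monotone_sort wP
  set b : Fin k' := ⟨k'', hk''lt⟩ with hbdef
  set C : Finset (Fin k') := Finset.Iio b with hCdef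
  set Pbig : Finset V := Finset.univ \ C.biUnion (fun i => P (σ i)) with hPbigdef
  have hCcard : C.card = k'' := by rw [hCdef, Fin.card_Iio]
  -- σ b's part is inside Pbig
  have hsub_b : ∀ j : Fin k', b ≤ j → P (σ j) ⊆ Pbig := by
    intro j hj x hx
    rw [hPbigdef, Finset.mem_sdiff]
    refine ⟨Finset.mem_univ x, ?_⟩
    intro hx'
    obtain ⟨i, hi, hxi⟩ := Finset.mem_biUnion.mp hx'
    have hij : i ≠ j := by
      intro h; subst h
      exact absurd hj (not_le.mpr (Finset.mem_Iio.mp hi))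
    have : σ i ≠ σ j := fun h => hij (σ.injective h)
    exact Finset.disjoint_left.mp (hdisj _ _ this) hxi hx
  have hPbigne : Pbig.Nonempty := by
    obtain ⟨x, hx⟩ := hne (σ b)
    exact ⟨x, hsub_b b le_rfl hx⟩
  have hwPbig : 0 < ∑ u ∈ Pbig, w u := Finset.sum_pos (fun u _ => hw u) hPbigne
  -- definition of Q
  refine ⟨fun i => if h : (i : ℕ) < k'' then P (σ ⟨i, h.trans hk''lt⟩) else Pbig, ?_, ?_, ?_, ?_⟩
  · intro i
    by_cases h : (i : ℕ) < k''
    · simpa [h] using hne (σ ⟨i, h.trans hk''lt⟩)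
    · simpa [h] using hPbigne
  · intro i j hij
    by_cases hi : (i : ℕ) < k'' <;> by_cases hj : (j : ℕ) < k''
    · simp only [dif_pos hi, dif_pos hj]
      apply hdisj
      intro h
      exact hij (Fin.ext (by simpa using congrArg Fin.val (σ.injective h)))
    · simp only [dif_pos hi, dif_neg hj]
      rw [Finset.disjoint_right]
      intro x hx hxi
      rw [hPbigdef, Finset.mem_sdiff] at hx
      refine hx.2 (Finset.mem_biUnion.mpr ⟨⟨↑i, hi.trans hk''lt⟩, ?_, hxi⟩)
      exact Finset.mem_Iio.mpr (show (⟨↑i, hi.trans hk''lt⟩ : Fin k') < b from hi)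
    · simp only [dif_neg hi, dif_pos hj]
      rw [Finset.disjoint_left]
      intro x hx hxj
      rw [hPbigdef, Finset.mem_sdiff] at hx
      refine hx.2 (Finset.mem_biUnion.mpr ⟨⟨↑j, hj.trans hk''lt⟩, ?_, hxj⟩)
      exact Finset.mem_Iio.mpr (show (⟨↑j, hj.trans hk''lt⟩ : Fin k') < b from hj)
    · exfalso
      apply hij
      apply Fin.ext
      have hi' : (i : ℕ) = k'' := le_antisymm (Nat.lt_succ_iff.mp i.isLt) (not_lt.mp hi)
      have hj' : (j : ℕ) = k'' := le_antisymm (Nat.lt_succ_iff.mp j.isLt) (not_lt.mp hj)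
      rw [hi', hj']
  · apply Finset.eq_univ_of_forall
    intro x
    rw [Finset.mem_biUnion]
    by_cases hx : x ∈ Pbig
    · refine ⟨⟨k'', Nat.lt_succ_self _⟩, Finset.mem_univ _, ?_⟩
      simp [hx]
    · rw [hPbigdef, Finset.mem_sdiff, not_and, not_not] at hx
      obtain ⟨i, hi, hxi⟩ := Finset.mem_biUnion.mp (hx (Finset.mem_univ x))
      have hilt' : i < b := Finset.mem_Iio.mp hi
      have hilt : (i : ℕ) < k'' := hilt'
      refine ⟨⟨i, hilt.trans (Nat.lt_succ_self _)⟩, Finset.mem_univ _, ?_⟩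
      simp only [dif_pos hilt]
      convert hxi using 3
  · -- expansion bounds
    have hZle : Z ≤ Z / ε := by
      rw [le_div_iff₀ hε0]; nlinarith
    intro i
    by_cases h : (i : ℕ) < k''
    · simp only [dif_pos h]
      exact (hexp _).trans hZle
    simp only [dif_neg h]
    -- cut edges of Pbig are contained in union of cut edges of chosen parts
    have hcutsub : cutEdges G Pbig ⊆ C.biUnion (fun i => cutEdges G (P (σ i))) := by
      intro e he
      rw [cutEdges, Finset.mem_filter] at he
      obtain ⟨hee, u, hu, v, hv, rfl⟩ := he
      rw [hPbigdef, Finset.mem_sdiff, not_and, not_not] at hv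
      obtain ⟨j, hj, hvj⟩ := Finset.mem_biUnion.mp (hv (Finset.mem_univ v))
      refine Finset.mem_biUnion.mpr ⟨j, hj, ?_⟩
      rw [cutEdges, Finset.mem_filter]
      refine ⟨hee, v, hvj, u, ?_, Sym2.eq_swap⟩
      intro hu'
      have := hsub_b b le_rfl
      rw [hPbigdef, Finset.mem_sdiff] at hu
      exact hu.2 (Finset.mem_biUnion.mpr ⟨j, hj, hu'⟩)
    have hcard : ((cutEdges G Pbig).card : ℝ) ≤ ∑ j ∈ C, ((cutEdges G (P (σ j))).card : ℝ) := by
      push_cast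
      exact_mod_cast Nat.cast_le.mpr ((Finset.card_le_card hcutsub).trans
        (Finset.card_biUnion_le))
    set m : ℝ := wP (σ b) with hmdef
    have hm0 : 0 < m := hwP _
    have hCsum : ∑ j ∈ C, wP (σ j) ≤ (k'' : ℝ) * m := by
      calc ∑ j ∈ C, wP (σ j) ≤ ∑ _j ∈ C, m :=
            Finset.sum_le_sum (fun j hj => hmono (le_of_lt (Finset.mem_Iio.mp hj)))
        _ = (k'' : ℝ) * m := by rw [Finset.sum_const, hCcard]; push_cast; ring
    -- lower bound for weight of Pbig
    set U : Finset (Fin k') := Finset.Ici b with hUdef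
    have hUcard : U.card = k' - k'' := by rw [hUdef, Fin.card_Ici]
    have hUsum : ((k' : ℝ) - k'') * m ≤ ∑ j ∈ U, wP (σ j) := by
      calc ((k' : ℝ) - k'') * m = ((k' - k'' : ℕ) : ℝ) * m := by
            rw [Nat.cast_sub hk''lt.le]
        _ = ∑ _j ∈ U, m := by rw [Finset.sum_const, hUcard]; push_cast; ring
        _ ≤ ∑ j ∈ U, wP (σ j) :=
            Finset.sum_le_sum (fun j hj => hmono (Finset.mem_Ici.mp hj))
    have hUsub : ∑ j ∈ U, wP (σ j) ≤ ∑ u ∈ Pbig, w u := by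
      have hdisjU : (U : Set (Fin k')).PairwiseDisjoint (fun j => P (σ j)) := by
        intro a _ c _ hac
        exact hdisj _ _ (fun h => hac (σ.injective h))
      calc ∑ j ∈ U, wP (σ j) = ∑ u ∈ U.biUnion (fun j => P (σ j)), w u :=
            (Finset.sum_biUnion hdisjU).symm
        _ ≤ ∑ u ∈ Pbig, w u := by
            apply Finset.sum_le_sum_of_subset_of_nonneg
            · intro x hx
              obtain ⟨j, hj, hxj⟩ := Finset.mem_biUnion.mp hx
              exact hsub_b j (Finset.mem_Ici.mp hj) hxj
            · exact fun u _ _ => (hw u).le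
    -- main chain
    have hchain : ((cutEdges G Pbig).card : ℝ) * ε ≤ Z * ∑ u ∈ Pbig, w u := by
      have h1 : ((cutEdges G Pbig).card : ℝ) ≤ Z * ((k'' : ℝ) * m) := by
        calc ((cutEdges G Pbig).card : ℝ) ≤ ∑ j ∈ C, ((cutEdges G (P (σ j))).card : ℝ) := hcard
          _ ≤ ∑ j ∈ C, Z * wP (σ j) := Finset.sum_le_sum (fun j _ => hcutle _)
          _ = Z * ∑ j ∈ C, wP (σ j) := by rw [Finset.mul_sum]
          _ ≤ Z * ((k'' : ℝ) * m) := by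
              apply mul_le_mul_of_nonneg_left hCsum hZ
      have h2 : ε * (k'' : ℝ) ≤ (k' : ℝ) - k'' := by
        nlinarith [mul_le_mul_of_nonneg_left hk''le hε0.le,
          mul_nonneg (mul_nonneg hε0.le hε0.le) hk'pos.le]
      have h3 : ((k' : ℝ) - k'') * m ≤ ∑ u ∈ Pbig, w u := hUsum.trans hUsub
      have hc0 : (0:ℝ) ≤ ((cutEdges G Pbig).card : ℝ) := Nat.cast_nonneg _
      have hk0 : (0:ℝ) ≤ (k'' : ℝ) := Nat.cast_nonneg _
      nlinarith [mul_nonneg hZ hm0.le, mul_nonneg (mul_nonneg hZ hk0) hm0.le]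
    rw [expansion, div_le_div_iff₀ hwPbig hε0]
    linarith
end

section
/- Let V be a finite set, let w : V → ℝ_{≥0}, let {ū_v}_{v∈V} be nonzero vectors in a real inner product space with ⟨ū_u, ū_v⟩ ≥ 0 for all u, v, and fix u ∈ V with ∑_{v∈V} w(v)·⟨ū_u, ū_v⟩ = 1. Let β ∈ (0,1] and let A_u = { v ∈ V : ⟨ū_u, ū_v⟩ / max{‖ū_u‖², ‖ū_v‖²} ≥ β }. Then ∑_{v∈A_u} w(v)·‖ū_v‖² ≤ 1/β. -/
open Finset
open scoped RealInnerProductSpace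

theorem mul_sq_norm_le_inner_of_le_inner_div_max {F : Type*} [NormedAddCommGroup F]
    [InnerProductSpace ℝ F] {x y : F} (hy : y ≠ 0) {β : ℝ} (hβ : 0 ≤ β)
    (h : β ≤ ⟪x, y⟫ / max (‖x‖ ^ 2) (‖y‖ ^ 2)) :
    β * ‖y‖ ^ 2 ≤ ⟪x, y⟫ := by
  have hmax : 0 < max (‖x‖ ^ 2) (‖y‖ ^ 2) :=
    lt_max_of_lt_right (pow_pos (norm_pos_iff.mpr hy) 2)
  calc β * ‖y‖ ^ 2 ≤ β * max (‖x‖ ^ 2) (‖y‖ ^ 2) := by gcongr; exact le_max_right _ _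
    _ ≤ ⟪x, y⟫ := (le_div_iff₀ hmax).mp h

theorem sum_filter_mul_le_sum_mul_div {ι : Type*} (s : Finset ι) (p : ι → Prop)
    [DecidablePred p] {w f g : ι → ℝ} (hw : ∀ i ∈ s, 0 ≤ w i) (hf : ∀ i ∈ s, 0 ≤ f i)
    {β : ℝ} (hβ : 0 < β) (hfg : ∀ i ∈ s, p i → β * g i ≤ f i) :
    ∑ i ∈ s.filter p, w i * g i ≤ (∑ i ∈ s, w i * f i) / β := by
  rw [le_div_iff₀ hβ, sum_mul]
  calc ∑ i ∈ s.filter p, w i * g i * β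
      = ∑ i ∈ s.filter p, w i * (β * g i) := sum_congr rfl fun _ _ => by ring
    _ ≤ ∑ i ∈ s.filter p, w i * f i := by
        refine sum_le_sum fun i hi => ?_
        obtain ⟨his, hpi⟩ := mem_filter.mp hi
        exact mul_le_mul_of_nonneg_left (hfg i his hpi) (hw i his)
    _ ≤ ∑ i ∈ s, w i * f i :=
        sum_le_sum_of_subset_of_nonneg (filter_subset _ _)
          fun i hi _ => mul_nonneg (hw i hi) (hf i hi)

theorem stmt7_general {V : Type*} [Fintype V]
    {F : Type*} [NormedAddCommGroup F] [InnerProductSpace ℝ F]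
    (w : V → ℝ) (hw : ∀ v, 0 ≤ w v)
    (ub : V → F) (hub : ∀ v, ub v ≠ 0)
    (hpos : ∀ u v : V, 0 ≤ ⟪ub u, ub v⟫)
    (u : V) (hu : ∑ v, w v * ⟪ub u, ub v⟫ = 1)
    (β : ℝ) (hβ : β ∈ Set.Ioc (0 : ℝ) 1) :
    ∑ v ∈ Finset.univ.filter
        (fun v => β ≤ ⟪ub u, ub v⟫ / max (‖ub u‖ ^ 2) (‖ub v‖ ^ 2)),
      w v * ‖ub v‖ ^ 2 ≤ 1 / β := by
  rw [← hu]
  exact sum_filter_mul_le_sum_mul_div univ _ (fun v _ => hw v) (fun v _ => hpos u v) hβ.1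
    fun v _ hv => mul_sq_norm_le_inner_of_le_inner_div_max (hub v) hβ.1.le hv

theorem stmt7 {V : Type*} [Fintype V] [DecidableEq V]
    {F : Type*} [NormedAddCommGroup F] [InnerProductSpace ℝ F]
    (w : V → ℝ) (hw : ∀ v, 0 ≤ w v)
    (ub : V → F) (hub : ∀ v, ub v ≠ 0)
    (hpos : ∀ u v : V, 0 ≤ ⟪ub u, ub v⟫)
    (u : V) (hu : ∑ v, w v * ⟪ub u, ub v⟫ = 1)
    (β : ℝ) (hβ : β ∈ Set.Ioc (0 : ℝ) 1) :
    ∑ v ∈ Finset.univ.filter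
        (fun v => β ≤ ⟪ub u, ub v⟫ / max (‖ub u‖ ^ 2) (‖ub v‖ ^ 2)),
      w v * ‖ub v‖ ^ 2 ≤ 1 / β :=
  stmt7_general w hw ub hub hpos u hu β hβ
end

section
/- Let V be a finite set, w : V → ℝ_{≥0}, k ≥ 2 a real number, ε ∈ (0,1], and β = 1 − ε/4. Let {ū_v}_{v∈V} be nonzero vectors in a real inner product space satisfying: ⟨ū_u, ū_v⟩ ≥ 0 for all u, v ∈ V; ∑_{v∈V} w(v)·⟨ū_u, ū_v⟩ = 1 for every u ∈ V; and ∑_{v∈V} w(v)·‖ū_v‖² = k. Let S be a random subset of V and α > 0 be such that: (i) Pr[u ∈ S] = α for every u ∈ V, and (ii) Pr[u ∈ S and v ∈ S] ≤ αε/(12k) for every pair u, v ∈ V with ⟨ū_u, ū_v⟩ < β·max{‖ū_u‖², ‖ū_v‖²}. Then for every u ∈ V, Pr[u ∈ S and ∑_{v∈S} w(v)·‖ū_v‖² ≤ 1 + ε/2] ≥ α/2. -/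
/-!
Fix `u` and split `V` into the vectors close to `ū_u` (`⟪ū_u, ū_v⟫ ≥ β·max(‖ū_u‖², ‖ū_v‖²)`)
and the far ones. The close ones satisfy `β‖ū_v‖² ≤ ⟪ū_u, ū_v⟫`, so by `∑ w(v)⟪ū_u, ū_v⟫ = 1`
their total mass is at most `1/β ≤ 1 + ε/3`, whatever `S` is. Each far `v` lies in `S` together
with `u` with probability at most `αε/(12k)`, and the far vectors have total mass at most `k`,
so the expected far mass of `S` on the event `u ∈ S` is at most `αε/12`. By Markov's inequality
the far mass exceeds `ε/6` with probability at most `α/2` on that event, which leaves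
probability at least `α/2` for `u ∈ S` and `μ(S) ≤ 1 + ε/3 + ε/6`.
-/

open Finset
open scoped RealInnerProductSpace

section Markov

variable {ι : Type*} (s : Finset ι) {p f : ι → ℝ}

theorem mul_sum_filter_lt_le_sum_mul (hp : ∀ x ∈ s, 0 ≤ p x) (hf : ∀ x ∈ s, 0 ≤ f x) (t : ℝ) :
    t * ∑ x ∈ s.filter (t < f ·), p x ≤ ∑ x ∈ s, p x * f x := by
  rw [mul_sum]
  calc ∑ x ∈ s.filter (t < f ·), t * p x
      ≤ ∑ x ∈ s.filter (t < f ·), p x * f x := by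
        refine sum_le_sum fun x hx => ?_
        obtain ⟨hxs, htx⟩ := mem_filter.mp hx
        nlinarith [hp x hxs]
    _ ≤ ∑ x ∈ s, p x * f x :=
        sum_le_sum_of_subset_of_nonneg (filter_subset _ s)
          fun x hx _ => mul_nonneg (hp x hx) (hf x hx)

theorem sum_sub_div_le_sum_filter_le (hp : ∀ x ∈ s, 0 ≤ p x) (hf : ∀ x ∈ s, 0 ≤ f x)
    {t : ℝ} (ht : 0 < t) :
    ∑ x ∈ s, p x - (∑ x ∈ s, p x * f x) / t ≤ ∑ x ∈ s.filter (f · ≤ t), p x := by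
  have hsplit := sum_filter_add_sum_filter_not s (f · ≤ t) p
  simp only [not_le] at hsplit
  have hmarkov : ∑ x ∈ s.filter (t < f ·), p x ≤ (∑ x ∈ s, p x * f x) / t := by
    rw [le_div_iff₀' ht]
    exact mul_sum_filter_lt_le_sum_mul s hp hf t
  linarith

end Markov

section DoubleCounting

variable {V : Type*} [DecidableEq V] (s : Finset (Finset V)) (T : Finset V)
  (p : Finset V → ℝ)

theorem sum_mul_sum_inter_eq (c : V → ℝ) :
    ∑ S ∈ s, p S * ∑ v ∈ S ∩ T, c v = ∑ v ∈ T, c v * ∑ S ∈ s.filter (v ∈ ·), p S := by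
  simp only [mul_sum]
  rw [sum_comm' (t' := T) (s' := fun v => s.filter (v ∈ ·))]
  · exact sum_congr rfl fun _ _ => sum_congr rfl fun _ _ => mul_comm _ _
  · intro S v
    simp only [mem_inter, mem_filter]
    tauto

theorem sum_mul_sum_inter_le {c : V → ℝ} {δ : ℝ} (hc : ∀ v ∈ T, 0 ≤ c v)
    (hpair : ∀ v ∈ T, ∑ S ∈ s.filter (v ∈ ·), p S ≤ δ) :
    ∑ S ∈ s, p S * ∑ v ∈ S ∩ T, c v ≤ (∑ v ∈ T, c v) * δ := by
  rw [sum_mul_sum_inter_eq, sum_mul]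
  exact sum_le_sum fun v hv => mul_le_mul_of_nonneg_left (hpair v hv) (hc v hv)

end DoubleCounting

section FarSet

variable {V : Type*} [Fintype V] [DecidableEq V]
  {F : Type*} [NormedAddCommGroup F] [InnerProductSpace ℝ F]

noncomputable def farSet (ub : V → F) (β : ℝ) (u : V) : Finset V :=
  univ.filter fun v => ⟪ub u, ub v⟫ < β * max (‖ub u‖ ^ 2) (‖ub v‖ ^ 2)

theorem mul_sum_sdiff_farSet_le {w : V → ℝ} (hw : ∀ v, 0 ≤ w v) {ub : V → F} {β : ℝ}
    (hβ : 0 ≤ β) {u : V} (hpos : ∀ v, 0 ≤ ⟪ub u, ub v⟫) (S : Finset V) :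
    β * ∑ v ∈ S \ farSet ub β u, w v * ‖ub v‖ ^ 2 ≤ ∑ v, w v * ⟪ub u, ub v⟫ := by
  rw [mul_sum]
  calc ∑ v ∈ S \ farSet ub β u, β * (w v * ‖ub v‖ ^ 2)
      ≤ ∑ v ∈ S \ farSet ub β u, w v * ⟪ub u, ub v⟫ := by
        refine sum_le_sum fun v hv => ?_
        have hclose : β * max (‖ub u‖ ^ 2) (‖ub v‖ ^ 2) ≤ ⟪ub u, ub v⟫ := by
          simpa [farSet] using (mem_sdiff.mp hv).2
        have hnorm : β * ‖ub v‖ ^ 2 ≤ ⟪ub u, ub v⟫ :=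
          (mul_le_mul_of_nonneg_left (le_max_right _ _) hβ).trans hclose
        nlinarith [hw v]
    _ ≤ ∑ v, w v * ⟪ub u, ub v⟫ :=
        sum_le_sum_of_subset_of_nonneg (subset_univ _)
          fun v _ _ => mul_nonneg (hw v) (hpos v)

theorem sum_mul_norm_sq_le_of_sum_inter_farSet_le {w : V → ℝ} (hw : ∀ v, 0 ≤ w v)
    {ub : V → F} {u : V} (hpos : ∀ v, 0 ≤ ⟪ub u, ub v⟫) (hsum1 : ∑ v, w v * ⟪ub u, ub v⟫ = 1)
    {ε t : ℝ} (hε0 : 0 < ε) (hε1 : ε ≤ 1) {S : Finset V}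
    (hfar : ∑ v ∈ S ∩ farSet ub (1 - ε / 4) u, w v * ‖ub v‖ ^ 2 ≤ t) :
    ∑ v ∈ S, w v * ‖ub v‖ ^ 2 ≤ 1 + ε / 3 + t := by
  have hβ : 0 < 1 - ε / 4 := by linarith
  have hclose := mul_sum_sdiff_farSet_le hw hβ.le hpos S
  rw [hsum1] at hclose
  have hinv : 1 / (1 - ε / 4) ≤ 1 + ε / 3 := by
    rw [div_le_iff₀ hβ]
    nlinarith
  rw [← sum_inter_add_sum_sdiff S (farSet ub (1 - ε / 4) u)]
  linarith [(le_div_iff₀' hβ).mpr hclose]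

end FarSet

theorem stmt8_general {V : Type*} [Fintype V] [DecidableEq V]
    {F : Type*} [NormedAddCommGroup F] [InnerProductSpace ℝ F]
    (w : V → ℝ) (hw : ∀ v, 0 ≤ w v)
    (k ε β α : ℝ) (hk : 2 ≤ k) (hε : ε ∈ Set.Ioc (0 : ℝ) 1) (hβ : β = 1 - ε / 4)
    (ub : V → F)
    (hpos : ∀ u v : V, 0 ≤ ⟪ub u, ub v⟫)
    (hsum1 : ∀ u : V, ∑ v, w v * ⟪ub u, ub v⟫ = 1)
    (hsumk : ∑ v, w v * ‖ub v‖ ^ 2 = k)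
    -- the random set `S` is given by a probability distribution `p` on the subsets of `V`
    (p : Finset V → ℝ) (hp0 : ∀ S, 0 ≤ p S)
    (hα : 0 < α)
    -- (i) `Pr[u ∈ S] = α` for every `u`
    (hi : ∀ u : V, ∑ S ∈ Finset.univ.filter (fun S : Finset V => u ∈ S), p S = α)
    -- (ii) `Pr[u ∈ S ∧ v ∈ S] ≤ αε/(12k)` whenever `⟪ū_u, ū_v⟫ < β·max(‖ū_u‖², ‖ū_v‖²)`
    (hii : ∀ u v : V, ⟪ub u, ub v⟫ < β * max (‖ub u‖ ^ 2) (‖ub v‖ ^ 2) →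
      ∑ S ∈ Finset.univ.filter (fun S : Finset V => u ∈ S ∧ v ∈ S), p S ≤ α * ε / (12 * k)) :
    ∀ u : V,
      α / 2 ≤ ∑ S ∈ Finset.univ.filter
          (fun S : Finset V => u ∈ S ∧ ∑ v ∈ S, w v * ‖ub v‖ ^ 2 ≤ 1 + ε / 2), p S := by
  intro u
  obtain ⟨hε0, hε1⟩ := hε
  subst hβ
  set D := farSet ub (1 - ε / 4) u
  set far : Finset V → ℝ := fun S => ∑ v ∈ S ∩ D, w v * ‖ub v‖ ^ 2
  have hmass : ∀ v, 0 ≤ w v * ‖ub v‖ ^ 2 := fun v => mul_nonneg (hw v) (sq_nonneg _)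
  have hfar : ∑ S ∈ univ.filter (u ∈ ·), p S * far S ≤ α * ε / 12 := by
    calc ∑ S ∈ univ.filter (u ∈ ·), p S * far S
        ≤ (∑ v ∈ D, w v * ‖ub v‖ ^ 2) * (α * ε / (12 * k)) := by
          refine sum_mul_sum_inter_le _ _ _ (fun v _ => hmass v) fun v hv => ?_
          rw [filter_filter]
          exact hii u v (mem_filter.mp hv).2
      _ ≤ k * (α * ε / (12 * k)) := by
          gcongr
          exact hsumk ▸ sum_le_sum_of_subset_of_nonneg (subset_univ _) fun v _ _ => hmass v
      _ = α * ε / 12 := by field_simp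
  calc α / 2 = α - α * ε / 12 / (ε / 6) := by field_simp; ring
    _ ≤ ∑ S ∈ univ.filter (u ∈ ·), p S
          - (∑ S ∈ univ.filter (u ∈ ·), p S * far S) / (ε / 6) := by
        rw [hi u]; gcongr
    _ ≤ ∑ S ∈ (univ.filter (u ∈ ·)).filter (far · ≤ ε / 6), p S :=
        sum_sub_div_le_sum_filter_le _ (fun S _ => hp0 S)
          (fun S _ => sum_nonneg fun v _ => hmass v) (by positivity)
    _ ≤ _ := by
        refine sum_le_sum_of_subset_of_nonneg (fun S hS => ?_) fun S _ _ => hp0 S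
        simp only [mem_filter, mem_univ, true_and] at hS ⊢
        refine ⟨hS.1, ?_⟩
        linarith [sum_mul_norm_sq_le_of_sum_inter_farSet_le hw (hpos u) (hsum1 u) hε0 hε1 hS.2]

theorem stmt8 {V : Type*} [Fintype V] [DecidableEq V]
    {F : Type*} [NormedAddCommGroup F] [InnerProductSpace ℝ F]
    (w : V → ℝ) (hw : ∀ v, 0 ≤ w v)
    (k ε β α : ℝ) (hk : 2 ≤ k) (hε : ε ∈ Set.Ioc (0 : ℝ) 1) (hβ : β = 1 - ε / 4)
    (ub : V → F) (hub : ∀ v, ub v ≠ 0)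
    (hpos : ∀ u v : V, 0 ≤ ⟪ub u, ub v⟫)
    (hsum1 : ∀ u : V, ∑ v, w v * ⟪ub u, ub v⟫ = 1)
    (hsumk : ∑ v, w v * ‖ub v‖ ^ 2 = k)
    -- the random set `S` is given by a probability distribution `p` on the subsets of `V`
    (p : Finset V → ℝ) (hp0 : ∀ S, 0 ≤ p S) (hp1 : ∑ S, p S = 1)
    (hα : 0 < α)
    -- (i) `Pr[u ∈ S] = α` for every `u`
    (hi : ∀ u : V, ∑ S ∈ Finset.univ.filter (fun S : Finset V => u ∈ S), p S = α)
    -- (ii) `Pr[u ∈ S ∧ v ∈ S] ≤ αε/(12k)` whenever `⟪ū_u, ū_v⟫ < β·max(‖ū_u‖², ‖ū_v‖²)`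
    (hii : ∀ u v : V, ⟪ub u, ub v⟫ < β * max (‖ub u‖ ^ 2) (‖ub v‖ ^ 2) →
      ∑ S ∈ Finset.univ.filter (fun S : Finset V => u ∈ S ∧ v ∈ S), p S ≤ α * ε / (12 * k)) :
    ∀ u : V,
      α / 2 ≤ ∑ S ∈ Finset.univ.filter
          (fun S : Finset V => u ∈ S ∧ ∑ v ∈ S, w v * ‖ub v‖ ^ 2 ≤ 1 + ε / 2), p S :=
  stmt8_general w hw k ε β α hk hε hβ ub hpos hsum1 hsumk p hp0 hα hi hii
end

section
/- Let G=(V,E) be a finite simple graph with positive vertex weights w, let {ū_u}_{u∈V} be vectors in a real inner product space, let k > 0 and ε ∈ (0,1] be reals, and suppose μ(V) = k. Let S_1, …, S_T be pairwise disjoint subsets covering V with μ(S_i) ≤ 1 + ε/2 for every i, and let Z = (1/k)·∑_{i=1}^T ν(S_i). Then there exists a set of indices I ⊆ {1,…,T} with |I| ≥ (1−ε)·k such that for every i ∈ I there is a nonempty subset P_i ⊆ S_i with |E(P_i, V∖P_i)| ≤ (3Z/ε)·w(P_i); in particular the sets P_i, i ∈ I, are pairwise disjoint and each has expansion at most 3Z/ε.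 -/
open Finset

/-- `ν(S) = ∑_{(u,v)∈E, u∈S, v∉S} ‖ū_u‖² + ∑_{(u,v)∈E, u,v∈S} |‖ū_u‖² − ‖ū_v‖²|`,
each edge counted once. -/
noncomputable def nu {V : Type*} [Fintype V] [DecidableEq V] (G : SimpleGraph V)
    [DecidableRel G.Adj] {F : Type*} [NormedAddCommGroup F] [InnerProductSpace ℝ F]
    (ub : V → F) (S : Finset V) : ℝ :=
  ∑ e ∈ G.edgeFinset,
    Sym2.lift ⟨fun u v =>
      if u ∈ S ∧ v ∈ S then |‖ub u‖ ^ 2 - ‖ub v‖ ^ 2|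
      else if u ∈ S then ‖ub u‖ ^ 2
      else if v ∈ S then ‖ub v‖ ^ 2
      else 0,
      by
        intro u v
        by_cases hu : u ∈ S <;> by_cases hv : v ∈ S <;>
          simp [hu, hv, abs_sub_comm]⟩ e


/-!
For `f ≥ 0`, both `μ_f(S) = ∑_{u ∈ S} w(u) f(u)` and `ν_f(S)` are layer-cake integrals over the
level sets `P_t = {u ∈ S | f(u) ≥ t}`, of `w(P_t)` and of `|E(P_t, V ∖ P_t)|` respectively.
So if `c · w(P) < |E(P, V ∖ P)|` for every nonempty `P ⊆ S`, then `c · μ_f(S) < ν_f(S)`;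
discretely, subtracting the minimum `m` of `f` on `S` peels off `m · w(S)` and `m · |E(S, V ∖ S)|`
and leaves a function of smaller support. Hence every part `S_i` with `ν(S_i) ≤ (3Z/ε) μ(S_i)`
and `μ(S_i) > 0` contains a set of expansion at most `3Z/ε`. By Markov's inequality the other
parts carry `μ`-mass at most `εk/3`, so the good parts carry at least `(1 - ε/3) k`, and as each
carries at most `1 + ε/2` there are at least `(1 - ε) k` of them.
-/

section Cut

variable {V : Type*} [Fintype V] [DecidableEq V] (G : SimpleGraph V) [DecidableRel G.Adj]

/-- `nu G ub` is `nuOf G (‖ub ·‖ ^ 2)` by definition. -/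
noncomputable def nuOf (f : V → ℝ) (S : Finset V) : ℝ :=
  ∑ e ∈ G.edgeFinset,
    Sym2.lift ⟨fun u v =>
      if u ∈ S ∧ v ∈ S then |f u - f v|
      else if u ∈ S then f u
      else if v ∈ S then f v
      else 0,
      by
        intro u v
        by_cases hu : u ∈ S <;> by_cases hv : v ∈ S <;>
          simp [hu, hv, abs_sub_comm]⟩ e

variable {G}

lemma mk_mem_cutEdges_iff {a b : V} (hab : G.Adj a b) {S : Finset V} :
    s(a, b) ∈ cutEdges G S ↔ a ∈ S ∧ b ∉ S ∨ b ∈ S ∧ a ∉ S := by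
  simp only [cutEdges, mem_filter, SimpleGraph.mem_edgeFinset, SimpleGraph.mem_edgeSet, hab,
    true_and, Sym2.eq_iff]
  grind

lemma nuOf_nonneg {f : V → ℝ} {S : Finset V} (hf : ∀ u ∈ S, 0 ≤ f u) : 0 ≤ nuOf G f S := by
  refine sum_nonneg fun e _ => ?_
  induction e using Sym2.ind with
  | _ a b =>
    simp only [Sym2.lift_mk]
    split_ifs with h₁ h₂ h₃ <;> first | positivity | exact hf a h₂ | exact hf b h₃

lemma nuOf_filter_pos {f : V → ℝ} {S : Finset V} (hf : ∀ u ∈ S, 0 ≤ f u) :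
    nuOf G f {u ∈ S | 0 < f u} = nuOf G f S := by
  refine sum_congr rfl fun e _ => ?_
  induction e using Sym2.ind with
  | _ a b =>
    simp only [Sym2.lift_mk, mem_filter]
    have hsign : ∀ x, x ∉ S ∨ (x ∈ S ∧ f x = 0) ∨ (x ∈ S ∧ 0 < f x) := fun x => by
      by_cases hx : x ∈ S
      · rcases (hf x hx).eq_or_lt with h | h
        exacts [Or.inr (Or.inl ⟨hx, h.symm⟩), Or.inr (Or.inr ⟨hx, h⟩)]
      · exact Or.inl hx
    rcases hsign a with ha | ⟨ha, ha₀⟩ | ⟨ha, ha₀⟩ <;>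
      rcases hsign b with hb | ⟨hb, hb₀⟩ | ⟨hb, hb₀⟩ <;> simp [*, abs_of_pos]

lemma nuOf_eq_add_mul_card_cutEdges {f g : V → ℝ} {m : ℝ} {S : Finset V}
    (hfg : ∀ u ∈ S, f u = g u + m) :
    nuOf G f S = nuOf G g S + m * #(cutEdges G S) := by
  rw [cutEdges, card_filter, Nat.cast_sum, mul_sum, nuOf, nuOf, ← sum_add_distrib]
  refine sum_congr rfl fun e he => ?_
  induction e using Sym2.ind with
  | _ a b =>
    have hcut := mk_mem_cutEdges_iff (SimpleGraph.mem_edgeFinset.mp he) (S := S)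
    simp only [cutEdges, mem_filter, he, true_and] at hcut
    simp only [Sym2.lift_mk, hcut]
    by_cases ha : a ∈ S <;> by_cases hb : b ∈ S <;> simp [ha, hb, hfg]

lemma mul_sum_lt_nuOf {w f : V → ℝ} {c : ℝ} {S : Finset V} (hw : ∀ u ∈ S, 0 ≤ w u)
    (hf : ∀ u ∈ S, 0 ≤ f u)
    (hcut : ∀ P ⊆ S, P.Nonempty → c * ∑ u ∈ P, w u < #(cutEdges G P))
    (hμ : 0 < ∑ u ∈ S, w u * f u) :
    c * ∑ u ∈ S, w u * f u < nuOf G f S := by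
  induction S using Finset.strongInduction generalizing f with
  | H S ih =>
  have reduce : ∀ g : V → ℝ, (∀ u ∈ S, 0 ≤ g u) → {u ∈ S | 0 < g u} ⊂ S →
      0 < ∑ u ∈ S, w u * g u → c * ∑ u ∈ S, w u * g u < nuOf G g S := by
    intro g hg hsub hμg
    have hsupp : ∑ u ∈ S with 0 < g u, w u * g u = ∑ u ∈ S, w u * g u :=
      sum_filter_of_ne fun u hu hne =>
        (hg u hu).lt_of_ne' fun h => hne (by rw [h, mul_zero])
    rw [← hsupp] at hμg ⊢
    rw [← nuOf_filter_pos hg]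
    exact ih _ hsub (fun u hu => hw u (hsub.subset hu)) (fun u hu => hg u (hsub.subset hu))
      (fun P hP => hcut P (hP.trans hsub.subset)) hμg
  by_cases hpos : ∀ u ∈ S, 0 < f u
  · have hne : S.Nonempty := nonempty_of_sum_ne_zero hμ.ne'
    obtain ⟨u₀, hu₀, hmin⟩ := S.exists_min_image f hne
    set m := f u₀
    have hm : 0 < m := hpos u₀ hu₀
    have hg : ∀ u ∈ S, 0 ≤ f u - m := fun u hu => sub_nonneg.mpr (hmin u hu)
    have hsub : {u ∈ S | 0 < f u - m} ⊂ S :=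
      ssubset_iff_of_subset (filter_subset _ _) |>.mpr ⟨u₀, hu₀, by simp [m]⟩
    have hμ_split : ∑ u ∈ S, w u * f u = ∑ u ∈ S, w u * (f u - m) + m * ∑ u ∈ S, w u := by
      rw [mul_sum, ← sum_add_distrib]
      exact sum_congr rfl fun u _ => by ring
    have hν_split := nuOf_eq_add_mul_card_cutEdges (G := G) (g := fun u => f u - m) (m := m)
      (S := S) fun u _ => by ring
    have hlevel : c * ∑ u ∈ S, w u * (f u - m) ≤ nuOf G (fun u => f u - m) S := by
      rcases (sum_nonneg fun u hu => mul_nonneg (hw u hu) (hg u hu)).eq_or_lt with h | h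
      · rw [← h, mul_zero]; exact nuOf_nonneg hg
      · exact (reduce _ hg hsub h).le
    have hS := mul_lt_mul_of_pos_left (hcut S subset_rfl hne) hm
    rw [hμ_split, hν_split]
    linarith
  · obtain ⟨u₀, hu₀, hf₀⟩ := not_forall₂.mp hpos
    exact reduce f hf
      (ssubset_iff_of_subset (filter_subset _ _) |>.mpr ⟨u₀, hu₀, by simp [hf₀]⟩) hμ

lemma exists_card_cutEdges_le {w f : V → ℝ} {c : ℝ} {S : Finset V} (hw : ∀ u ∈ S, 0 ≤ w u)
    (hf : ∀ u ∈ S, 0 ≤ f u) (hμ : 0 < ∑ u ∈ S, w u * f u)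
    (hν : nuOf G f S ≤ c * ∑ u ∈ S, w u * f u) :
    ∃ P ⊆ S, P.Nonempty ∧ (#(cutEdges G P) : ℝ) ≤ c * ∑ u ∈ P, w u := by
  by_contra! h
  exact (mul_sum_lt_nuOf hw hf h hμ).not_ge hν

end Cut

lemma mul_sum_filter_not_le_sum {ι : Type*} {s : Finset ι} {a b : ι → ℝ} {r Z : ℝ}
    (ha : ∀ i ∈ s, 0 ≤ a i) (hb : ∀ i ∈ s, 0 ≤ b i) (hZ : 0 ≤ Z)
    (hsum : ∑ i ∈ s, b i = Z * ∑ i ∈ s, a i) :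
    r * ∑ i ∈ s with ¬(0 < a i ∧ b i ≤ r * Z * a i), a i ≤ ∑ i ∈ s, a i := by
  set bad := {i ∈ s | ¬(0 < a i ∧ b i ≤ r * Z * a i)}
  have hbad : ∀ i ∈ bad, r * Z * a i ≤ b i := fun i hi => by
    obtain ⟨his, hi⟩ := mem_filter.mp hi
    rcases (ha i his).eq_or_lt with h | h
    · rw [← h, mul_zero]; exact hb i his
    · exact (not_le.mp fun h' => hi ⟨h, h'⟩).le
  rcases hZ.eq_or_lt with rfl | hZ
  · have hb₀ : ∀ i ∈ s, b i = 0 := (sum_eq_zero_iff_of_nonneg hb).mp (by simpa using hsum)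
    have ha₀ : ∀ i ∈ bad, a i = 0 := fun i hi => by
      obtain ⟨his, hi⟩ := mem_filter.mp hi
      simp only [hb₀ i his, mul_zero, zero_mul, le_refl, and_true, not_lt] at hi
      exact le_antisymm hi (ha i his)
    rw [sum_eq_zero ha₀, mul_zero]
    exact sum_nonneg ha
  · refine le_of_mul_le_mul_left ?_ hZ
    calc Z * (r * ∑ i ∈ bad, a i) = ∑ i ∈ bad, r * Z * a i := by
          rw [← mul_assoc, mul_comm Z, mul_sum]
      _ ≤ ∑ i ∈ bad, b i := sum_le_sum hbad
      _ ≤ ∑ i ∈ s, b i := sum_le_sum_of_subset_of_nonneg (filter_subset _ _) fun i hi _ => hb i hi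
      _ = Z * ∑ i ∈ s, a i := hsum

lemma mul_sum_le_card_filter {ι : Type*} {s : Finset ι} {a b : ι → ℝ} {ε Z : ℝ} (hε : 0 < ε)
    (ha : ∀ i ∈ s, 0 ≤ a i) (ha_le : ∀ i ∈ s, a i ≤ 1 + ε / 2) (hb : ∀ i ∈ s, 0 ≤ b i)
    (hZ : 0 ≤ Z) (hsum : ∑ i ∈ s, b i = Z * ∑ i ∈ s, a i) :
    (1 - ε) * ∑ i ∈ s, a i ≤ #{i ∈ s | 0 < a i ∧ b i ≤ 3 / ε * Z * a i} := by
  set good := {i ∈ s | 0 < a i ∧ b i ≤ 3 / ε * Z * a i}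
  have hbad := mul_sum_filter_not_le_sum (r := 3 / ε) ha hb hZ hsum
  have hsplit := sum_filter_add_sum_filter_not s (fun i => 0 < a i ∧ b i ≤ 3 / ε * Z * a i) a
  rw [div_mul_eq_mul_div, div_le_iff₀ hε] at hbad
  have hgood : ∑ i ∈ good, a i ≤ #good * (1 + ε / 2) :=
    (sum_le_card_nsmul good a _ fun i hi => ha_le i (filter_subset _ _ hi)).trans_eq
      (nsmul_eq_mul _ _)
  nlinarith [mul_nonneg (mul_nonneg (sum_nonneg ha) hε.le) hε.le]

theorem stmt13 {V : Type*} [Fintype V] [DecidableEq V] (G : SimpleGraph V) [DecidableRel G.Adj]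
    {F : Type*} [NormedAddCommGroup F] [InnerProductSpace ℝ F]
    (w : V → ℝ) (hw : ∀ u, 0 < w u) (ub : V → F)
    (k ε : ℝ) (hk : 0 < k) (hε : ε ∈ Set.Ioc (0 : ℝ) 1)
    (hμV : ∑ u, w u * ‖ub u‖ ^ 2 = k)
    (T : ℕ) (S : Fin T → Finset V)
    (hdisj : ∀ i j, i ≠ j → Disjoint (S i) (S j))
    (hcover : Finset.univ.biUnion S = Finset.univ)
    (hμ : ∀ i, ∑ u ∈ S i, w u * ‖ub u‖ ^ 2 ≤ 1 + ε / 2)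
    (Z : ℝ) (hZ : Z = (1 / k) * ∑ i, nu G ub (S i)) :
    ∃ (I : Finset (Fin T)) (P : Fin T → Finset V),
      (1 - ε) * k ≤ (I.card : ℝ) ∧
      (∀ i ∈ I, P i ⊆ S i ∧ (P i).Nonempty ∧
        ((cutEdges G (P i)).card : ℝ) ≤ (3 * Z / ε) * ∑ u ∈ P i, w u) ∧
      (∀ i ∈ I, ∀ j ∈ I, i ≠ j → Disjoint (P i) (P j)) ∧
      (∀ i ∈ I, expansion G w (P i) ≤ 3 * Z / ε) := by
  obtain ⟨hε₀, -⟩ := hε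
  set μ : Fin T → ℝ := fun i => ∑ u ∈ S i, w u * ‖ub u‖ ^ 2
  have hμ₀ : ∀ i, 0 ≤ μ i := fun i => sum_nonneg fun u _ => mul_nonneg (hw u).le (sq_nonneg _)
  have hν₀ : ∀ i, 0 ≤ nu G ub (S i) := fun i => nuOf_nonneg fun u _ => sq_nonneg _
  have hμ_sum : ∑ i, μ i = k := by
    rw [← hμV, ← sum_biUnion fun i _ j _ hij => hdisj i j hij, hcover]
  have hν_sum : ∑ i, nu G ub (S i) = Z * ∑ i, μ i := by
    rw [hμ_sum, hZ]; field_simp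
  have hZ₀ : 0 ≤ Z := hZ ▸ mul_nonneg (by positivity) (sum_nonneg fun i _ => hν₀ i)
  have hP : ∀ i ∈ ({i | 0 < μ i ∧ nu G ub (S i) ≤ 3 / ε * Z * μ i} : Finset (Fin T)),
      ∃ P ⊆ S i, P.Nonempty ∧ (#(cutEdges G P) : ℝ) ≤ 3 * Z / ε * ∑ u ∈ P, w u := fun i hi => by
    obtain ⟨hμi, hνi⟩ := (mem_filter.mp hi).2
    rw [← div_mul_eq_mul_div]
    exact exists_card_cutEdges_le (fun u _ => (hw u).le) (fun u _ => sq_nonneg _) hμi hνi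
  choose! P hPS hPne hPcut using hP
  refine ⟨_, P, hμ_sum ▸ mul_sum_le_card_filter hε₀ (fun i _ => hμ₀ i) (fun i _ => hμ i)
    (fun i _ => hν₀ i) hZ₀ hν_sum, fun i hi => ⟨hPS i hi, hPne i hi, hPcut i hi⟩,
    fun i hi j hj hij => (hdisj i j hij).mono (hPS i hi) (hPS j hj), fun i hi => ?_⟩
  rw [expansion, div_le_iff₀ (sum_pos (fun u _ => hw u) (hPne i hi))]
  exact hPcut i hi
end

section
/- For every t > 0 and every β ∈ (0,1], Φ̄(βt) ≤ Φ̄(t)^{β²}, where Φ̄(t) is the probability that a standard normal random variable is at least t. -/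
/-!
Let `R t = log Φ̄(t) / t²`. The claim is `R (β t) ≤ R t`, so it suffices that `R` is nondecreasing
on `(0, ∞)`. Since `Φ̄' = -φ`, the sign of `R'` is that of `-2 Φ̄ log Φ̄ - t φ(t)`. Two classical tail
bounds settle it: the shifted Chernoff bound `Φ̄(t) ≤ ½ e^{-t²/2}` gives
`-2 log Φ̄(t) ≥ t² + 2 log 2 ≥ t² + 1`, and Gordon's bound `Φ̄(t) ≥ t φ(t) / (1 + t²)` turns this
into `-2 Φ̄ log Φ̄ ≥ (1 + t²) Φ̄ ≥ t φ(t)`.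
-/

open ProbabilityTheory MeasureTheory Real Set Filter Topology

local notation "φ" => gaussianPDFReal 0 1

lemma gaussianPDFReal_zero_one (x : ℝ) : φ x = (√(2 * π))⁻¹ * rexp (-x ^ 2 / 2) := by
  simp [gaussianPDFReal]

lemma hasDerivAt_gaussianPDFReal_zero_one (x : ℝ) : HasDerivAt φ (-x * φ x) x := by
  have hexp : HasDerivAt (fun y : ℝ => -y ^ 2 / 2) (-x) x := by
    simpa using ((hasDerivAt_pow 2 x).neg.div_const 2).congr_deriv (by ring)
  rw [funext gaussianPDFReal_zero_one]
  exact (hexp.exp.const_mul (√(2 * π))⁻¹).congr_deriv (by ring)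

lemma continuous_gaussianPDFReal_zero_one : Continuous φ :=
  continuous_iff_continuousAt.2 fun x => (hasDerivAt_gaussianPDFReal_zero_one x).continuousAt

lemma tendsto_gaussianPDFReal_zero_one_atTop : Tendsto φ atTop (𝓝 0) := by
  have hsq : Tendsto (fun x : ℝ => -x ^ 2 / 2) atTop atBot := by
    simp only [neg_div]
    exact tendsto_neg_atTop_atBot.comp
      ((tendsto_pow_atTop two_ne_zero).atTop_div_const (two_pos : (0 : ℝ) < 2))
  simpa [funext gaussianPDFReal_zero_one] using
    (tendsto_exp_atBot.comp hsq).const_mul (√(2 * π))⁻¹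

/-- `Φ̄(t) = P[g > t]`. -/
noncomputable def gaussianTail (t : ℝ) : ℝ := ∫ x in Ioi t, φ x

lemma gaussianReal_setOf_le (t : ℝ) :
    gaussianReal 0 1 {x | t ≤ x} = ENNReal.ofReal (gaussianTail t) := by
  rw [gaussianReal_apply_eq_integral 0 one_ne_zero, gaussianTail, ← integral_Ici_eq_integral_Ioi]
  rfl

lemma gaussianTail_pos (t : ℝ) : 0 < gaussianTail t := by
  rw [gaussianTail, setIntegral_pos_iff_support_of_nonneg_ae
    (ae_of_all _ (gaussianPDFReal_nonneg 0 1)) (integrable_gaussianPDFReal 0 1).integrableOn,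
    Function.support_eq_univ fun x => (gaussianPDFReal_pos 0 1 x one_ne_zero).ne', univ_inter]
  simp

lemma gaussianTail_zero : gaussianTail 0 = 1 / 2 := by
  have h := integral_gaussian_Ioi (1 / 2)
  have hexp : ∀ x : ℝ, rexp (-x ^ 2 / 2) = rexp (-(1 / 2) * x ^ 2) := fun x => by ring_nf
  simp only [gaussianTail, gaussianPDFReal_zero_one, integral_const_mul, hexp, h]
  rw [show π / (1 / 2) = 2 * π by ring]
  field_simp

lemma gaussianTail_eq_sub_intervalIntegral (t : ℝ) :
    gaussianTail t = gaussianTail 0 - ∫ x in (0 : ℝ)..t, φ x := by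
  rw [← intervalIntegral.integral_Ioi_sub_Ioi' (integrable_gaussianPDFReal 0 1).integrableOn
    (integrable_gaussianPDFReal 0 1).integrableOn, gaussianTail, gaussianTail]
  ring

lemma hasDerivAt_gaussianTail (t : ℝ) : HasDerivAt gaussianTail (-φ t) t := by
  rw [funext gaussianTail_eq_sub_intervalIntegral]
  exact ((continuous_gaussianPDFReal_zero_one.integral_hasStrictDerivAt 0 t).hasDerivAt).const_sub _

lemma tendsto_gaussianTail_atTop : Tendsto gaussianTail atTop (𝓝 0) := by
  have h := tendsto_const_nhds (x := gaussianTail 0).sub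
    (intervalIntegral_tendsto_integral_Ioi 0 (integrable_gaussianPDFReal 0 1).integrableOn tendsto_id)
  rw [← gaussianTail, sub_self] at h
  rw [funext gaussianTail_eq_sub_intervalIntegral]
  exact h

/-- The Chernoff bound improved by the factor `½ = Φ̄(0)`, via `φ(x) ≤ e^{-t²/2} φ(x - t)` on `x ≥ t`. -/
lemma gaussianTail_le_exp_div_two {t : ℝ} (ht : 0 ≤ t) :
    gaussianTail t ≤ rexp (-t ^ 2 / 2) / 2 := by
  have hshift : ∫ x in Ioi t, φ (x - t) = gaussianTail 0 := by
    have h := (measurePreserving_add_right volume t).setIntegral_preimage_emb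
      (MeasurableEquiv.addRight t).measurableEmbedding (fun x => φ (x - t)) (Ioi t)
    rw [show (· + t) ⁻¹' Ioi t = Ioi 0 by ext; simp] at h
    rw [gaussianTail]
    simpa only [add_sub_cancel_right] using h.symm
  have hpoint : ∀ x ∈ Ioi t, φ x ≤ rexp (-t ^ 2 / 2) * φ (x - t) := by
    intro x hx
    rw [gaussianPDFReal_zero_one, gaussianPDFReal_zero_one, mul_left_comm, ← exp_add]
    have hcross : 0 ≤ t * (x - t) := mul_nonneg ht (sub_nonneg.2 (le_of_lt hx))
    gcongr
    nlinarith
  calc gaussianTail t ≤ ∫ x in Ioi t, rexp (-t ^ 2 / 2) * φ (x - t) :=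
        setIntegral_mono_on (integrable_gaussianPDFReal 0 1).integrableOn
          (((integrable_gaussianPDFReal 0 1).comp_sub_right t).const_mul _).integrableOn
          measurableSet_Ioi hpoint
    _ = rexp (-t ^ 2 / 2) / 2 := by
        rw [integral_const_mul, hshift, gaussianTail_zero]
        ring

/-- Gordon's lower bound: the gap `Φ̄(t) - t φ(t) / (1 + t²)` has derivative `-2 φ(t) / (1 + t²)²`,
so it decreases to its limit `0` at infinity. -/
lemma mul_gaussianPDFReal_div_le_gaussianTail (t : ℝ) : t * φ t / (1 + t ^ 2) ≤ gaussianTail t := by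
  set gap : ℝ → ℝ := fun x => gaussianTail x - x * φ x / (1 + x ^ 2)
  have hderiv : ∀ x, HasDerivAt gap (-2 * φ x / (1 + x ^ 2) ^ 2) x := by
    intro x
    have hnum : HasDerivAt (fun y => y * φ y) (φ x + x * (-x * φ x)) x :=
      ((hasDerivAt_id' x).mul (hasDerivAt_gaussianPDFReal_zero_one x)).congr_deriv (by ring)
    have hden : HasDerivAt (fun y : ℝ => 1 + y ^ 2) (2 * x) x := by
      simpa using (hasDerivAt_pow 2 x).const_add 1
    refine ((hasDerivAt_gaussianTail x).sub (hnum.div hden (by positivity))).congr_deriv ?_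
    field_simp
    ring
  have hanti : Antitone gap := by
    refine antitone_of_deriv_nonpos (fun x => (hderiv x).differentiableAt) fun x => ?_
    rw [(hderiv x).deriv]
    have hφ := gaussianPDFReal_pos 0 1 x one_ne_zero
    exact div_nonpos_of_nonpos_of_nonneg (by linarith) (by positivity)
  have hratio : Tendsto (fun x => x * φ x / (1 + x ^ 2)) atTop (𝓝 0) := by
    refine squeeze_zero' ?_ ?_ tendsto_gaussianPDFReal_zero_one_atTop
    · filter_upwards [eventually_ge_atTop 0] with x hx
      have := gaussianPDFReal_nonneg 0 1 x
      positivity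
    · filter_upwards with x
      have := gaussianPDFReal_nonneg 0 1 x
      rw [div_le_iff₀ (by positivity)]
      nlinarith [mul_nonneg this (sq_nonneg (x - 1 / 2))]
  have hgap : Tendsto gap atTop (𝓝 0) := by
    simpa using tendsto_gaussianTail_atTop.sub hratio
  linarith [hanti.le_of_tendsto hgap t]

lemma mul_gaussianPDFReal_le_neg_mul_log_gaussianTail {t : ℝ} (ht : 0 ≤ t) :
    t * φ t ≤ -2 * gaussianTail t * log (gaussianTail t) := by
  have hpos := gaussianTail_pos t
  have hlog : log (gaussianTail t) ≤ -t ^ 2 / 2 - log 2 :=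
    calc log (gaussianTail t) ≤ log (rexp (-t ^ 2 / 2) / 2) :=
          log_le_log hpos (gaussianTail_le_exp_div_two ht)
      _ = -t ^ 2 / 2 - log 2 := by rw [log_div (exp_ne_zero _) two_ne_zero, log_exp]
  have hlog2 : 1 < 2 * log 2 := by linarith [log_two_gt_d9]
  calc t * φ t ≤ (1 + t ^ 2) * gaussianTail t := by
        rw [← div_le_iff₀' (by positivity)]
        exact mul_gaussianPDFReal_div_le_gaussianTail t
    _ ≤ (t ^ 2 + 2 * log 2) * gaussianTail t := mul_le_mul_of_nonneg_right (by linarith) hpos.le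
    _ ≤ -2 * gaussianTail t * log (gaussianTail t) := by nlinarith

lemma monotoneOn_log_gaussianTail_div_sq :
    MonotoneOn (fun t => log (gaussianTail t) / t ^ 2) (Ioi 0) := by
  have hderiv : ∀ x ∈ Ioi (0 : ℝ), HasDerivAt (fun t => log (gaussianTail t) / t ^ 2)
      ((x / gaussianTail x) * (-2 * gaussianTail x * log (gaussianTail x) - x * φ x) / x ^ 4) x := by
    intro x hx
    have hx0 : x ≠ 0 := ne_of_gt hx
    have hpos := gaussianTail_pos x
    refine (((hasDerivAt_gaussianTail x).log hpos.ne').div (hasDerivAt_pow 2 x)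
      (by positivity)).congr_deriv ?_
    field_simp
    ring
  refine monotoneOn_of_hasDerivWithinAt_nonneg (convex_Ioi 0)
    (fun x hx => (hderiv x hx).continuousAt.continuousWithinAt)
    (fun x hx => (hderiv x (interior_subset hx)).hasDerivWithinAt) fun x hx => ?_
  rw [interior_Ioi] at hx
  have hx : (0 : ℝ) < x := hx
  have hkey := mul_gaussianPDFReal_le_neg_mul_log_gaussianTail hx.le
  have hpos := gaussianTail_pos x
  exact div_nonneg (mul_nonneg (by positivity) (sub_nonneg.2 hkey)) (by positivity)

lemma gaussianTail_mul_le_rpow {t β : ℝ} (ht : 0 < t) (hβ : β ∈ Ioc 0 1) :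
    gaussianTail (β * t) ≤ gaussianTail t ^ (β ^ 2) := by
  obtain ⟨hβ0, hβ1⟩ := hβ
  have hβt : 0 < β * t := mul_pos hβ0 ht
  have hR := monotoneOn_log_gaussianTail_div_sq hβt ht (by nlinarith)
  rw [div_le_div_iff₀ (by positivity) (by positivity)] at hR
  have hlog : log (gaussianTail (β * t)) ≤ β ^ 2 * log (gaussianTail t) :=
    le_of_mul_le_mul_right (by linarith) (by positivity : (0 : ℝ) < t ^ 2)
  rwa [← log_le_log_iff (gaussianTail_pos _) (rpow_pos_of_pos (gaussianTail_pos t) _),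
    log_rpow (gaussianTail_pos t)]

theorem stmt14 (t β : ℝ) (ht : 0 < t) (hβ : β ∈ Set.Ioc (0 : ℝ) 1) :
    gaussianReal 0 1 {x | β * t ≤ x} ≤ (gaussianReal 0 1 {x | t ≤ x}) ^ (β ^ 2) := by
  rw [gaussianReal_setOf_le, gaussianReal_setOf_le,
    ENNReal.ofReal_rpow_of_pos (gaussianTail_pos t)]
  exact ENNReal.ofReal_le_ofReal (gaussianTail_mul_le_rpow ht hβ)
end

section
/- Let m ≥ 2 and let G be the disjoint union of two complete graphs, each on m vertices, with vertex weights equal to degrees (so w(u) = m−1 for every vertex u). Then for every partition of the vertex set of G into k ≥ 3 nonempty parts P_1, …, P_k, there exists a part P_i with φ_G(P_i) ≥ 1/3. -/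
open Finset

/-- The disjoint union of two complete graphs, each on `m` vertices: vertices are pairs
`(c, x)` with `c ∈ Fin 2` the clique index, and two distinct vertices are adjacent iff
they lie in the same clique. -/
def twoCliques (m : ℕ) : SimpleGraph (Fin 2 × Fin m) where
  Adj p q := p ≠ q ∧ p.1 = q.1
  symm := by constructor; intro p q h; exact ⟨h.1.symm, h.2.symm⟩
  loopless := by constructor; intro p h; exact h.1 rfl

instance (m : ℕ) : DecidableRel (twoCliques m).Adj :=
  fun p q => inferInstanceAs (Decidable (p ≠ q ∧ p.1 = q.1))

/-! A set `S` of expansion `< 1/3` must contain more than half of one of the two cliques: otherwise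
every `u ∈ S` has at least `m/2 ≥ (m-1)/3` neighbours outside `S`, and summing over `u ∈ S` gives
`|E(S, V∖S)| ≥ |S|(m-1)/3 = w(S)/3`. Two disjoint parts cannot both hold a majority of the same
clique, so at most two parts have expansion `< 1/3`. -/

section cutEdges

variable {V : Type*} [Fintype V] [DecidableEq V] (G : SimpleGraph V) [DecidableRel G.Adj]

theorem sum_card_neighborFinset_sdiff_le_card_cutEdges (S : Finset V) :
    ∑ u ∈ S, #(G.neighborFinset u \ S) ≤ #(cutEdges G S) := by
  rw [← card_sigma]
  refine card_le_card_of_injOn (fun x => s(x.1, x.2)) ?_ ?_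
  · rintro ⟨u, v⟩ huv
    simp only [coe_sigma, Set.mem_sigma_iff, mem_coe, mem_sdiff,
      SimpleGraph.mem_neighborFinset] at huv
    simp only [cutEdges, coe_filter, Set.mem_ofPred_eq, SimpleGraph.mem_edgeFinset,
      SimpleGraph.mem_edgeSet]
    exact ⟨huv.2.1, u, huv.1, v, huv.2.2, rfl⟩
  · rintro ⟨u, v⟩ huv ⟨u', v'⟩ huv' h
    simp only [coe_sigma, Set.mem_sigma_iff, mem_coe, mem_sdiff] at huv huv'
    rcases Sym2.eq_iff.mp h with ⟨rfl, rfl⟩ | ⟨rfl, -⟩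
    · rfl
    · exact absurd huv.1 huv'.2.2

end cutEdges

namespace twoCliques

variable {m : ℕ}

theorem adj_iff {p q : Fin 2 × Fin m} : (twoCliques m).Adj p q ↔ p ≠ q ∧ p.1 = q.1 := Iff.rfl

theorem card_filter_fst_eq (c : Fin 2) : #(univ.filter fun p : Fin 2 × Fin m => p.1 = c) = m := by
  have : (univ.filter fun p : Fin 2 × Fin m => p.1 = c) = {c} ×ˢ univ := by
    ext p
    simp only [mem_filter, mem_univ, true_and, mem_product, mem_singleton, and_true]
  rw [this, card_product, card_singleton, card_univ, Fintype.card_fin, one_mul]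

theorem card_neighborFinset_sdiff {S : Finset (Fin 2 × Fin m)} {u : Fin 2 × Fin m} (hu : u ∈ S) :
    #((twoCliques m).neighborFinset u \ S) = m - #(S.filter fun p => p.1 = u.1) := by
  have hN : (twoCliques m).neighborFinset u \ S = (univ.filter fun p => p.1 = u.1) \ S := by
    ext p
    simp only [mem_sdiff, SimpleGraph.mem_neighborFinset, adj_iff, mem_filter, mem_univ,
      true_and]
    constructor
    · rintro ⟨⟨-, h⟩, hp⟩
      exact ⟨h.symm, hp⟩
    · rintro ⟨h, hp⟩
      exact ⟨⟨fun hup => hp (hup ▸ hu), h.symm⟩, hp⟩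
  rw [hN, card_sdiff, card_filter_fst_eq, inter_filter, inter_univ]

theorem exists_two_mul_card_filter_fst_gt_of_expansion_lt (hm : 2 ≤ m)
    {S : Finset (Fin 2 × Fin m)} (hS : S.Nonempty)
    (h : expansion (twoCliques m) (fun _ => (m : ℝ) - 1) S < 1 / 3) :
    ∃ c : Fin 2, m < 2 * #(S.filter fun p => p.1 = c) := by
  by_contra! hsmall
  have hnat : #S * (m - 1) ≤ 3 * #(cutEdges (twoCliques m) S) :=
    calc #S * (m - 1) = ∑ _u ∈ S, (m - 1) := by rw [sum_const, smul_eq_mul]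
      _ ≤ ∑ u ∈ S, 3 * #((twoCliques m).neighborFinset u \ S) := by
        refine sum_le_sum fun u hu => ?_
        have := hsmall u.1
        rw [card_neighborFinset_sdiff hu]
        omega
      _ = 3 * ∑ u ∈ S, #((twoCliques m).neighborFinset u \ S) := (mul_sum ..).symm
      _ ≤ 3 * #(cutEdges (twoCliques m) S) :=
        Nat.mul_le_mul_left 3 (sum_card_neighborFinset_sdiff_le_card_cutEdges _ S)
  have hreal : (#S : ℝ) * ((m : ℝ) - 1) ≤ 3 * #(cutEdges (twoCliques m) S) := by
    have : ((m - 1 : ℕ) : ℝ) = (m : ℝ) - 1 := by push_cast [show 1 ≤ m by omega]; ring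
    rw [← this]
    exact_mod_cast hnat
  have hw : (0 : ℝ) < #S * ((m : ℝ) - 1) := by
    have : (2 : ℝ) ≤ m := by exact_mod_cast hm
    have : (0 : ℝ) < #S := by exact_mod_cast hS.card_pos
    exact mul_pos this (by linarith)
  rw [expansion, sum_const, nsmul_eq_mul, div_lt_iff₀ hw] at h
  linarith

theorem card_filter_fst_add_card_filter_fst_le {A B : Finset (Fin 2 × Fin m)} (hAB : Disjoint A B)
    (c : Fin 2) : #(A.filter fun p => p.1 = c) + #(B.filter fun p => p.1 = c) ≤ m := by
  rw [← card_union_of_disjoint (disjoint_filter_filter hAB), ← filter_union]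
  exact (card_le_card (filter_subset_filter _ (subset_univ _))).trans_eq (card_filter_fst_eq c)

end twoCliques

theorem stmt16_general (m : ℕ) (hm : 2 ≤ m) (k : ℕ) (hk : 3 ≤ k)
    (P : Fin k → Finset (Fin 2 × Fin m))
    (hne : ∀ i, (P i).Nonempty)
    (hdisj : ∀ i j, i ≠ j → Disjoint (P i) (P j)) :
    ∃ i, (1 : ℝ) / 3 ≤ expansion (twoCliques m) (fun _ => (m : ℝ) - 1) (P i) := by
  by_contra! hsmall
  choose c hc using fun i =>
    twoCliques.exists_two_mul_card_filter_fst_gt_of_expansion_lt hm (hne i) (hsmall i)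
  have hc_inj : Function.Injective c := by
    intro i j hij
    by_contra hij'
    have hle := twoCliques.card_filter_fst_add_card_filter_fst_le (hdisj i j hij') (c i)
    have hi := hc i
    have hj := hc j
    rw [← hij] at hj
    omega
  have hk2 : k ≤ 2 := by simpa using Fintype.card_le_of_injective c hc_inj
  omega

theorem stmt16 (m : ℕ) (hm : 2 ≤ m) (k : ℕ) (hk : 3 ≤ k)
    (P : Fin k → Finset (Fin 2 × Fin m))
    (hne : ∀ i, (P i).Nonempty)
    (hdisj : ∀ i j, i ≠ j → Disjoint (P i) (P j))
    (hcover : Finset.univ.biUnion P = Finset.univ) :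
    ∃ i, (1 : ℝ) / 3 ≤ expansion (twoCliques m) (fun _ => (m : ℝ) - 1) (P i) :=
  stmt16_general m hm k hk P hne hdisj
end

section
/- Let m ≥ 1, let k ≥ 2 be even, and let G be the disjoint union of two complete graphs C_1 and C_2, each on m vertices. Let e_1, …, e_{k/2} be the standard basis of ℝ^{k/2}. For each vertex u and index i ∈ {1,…,k}, define ū_{u,i} = √(2/k)·e_i if u ∈ C_1 and i ≤ k/2, ū_{u,i} = √(2/k)·e_{i−k/2} if u ∈ C_2 and i > k/2, and ū_{u,i} = 0 otherwise; define I = √(2/k)·∑_{i=1}^{k/2} e_i. Then: (a) ∑_{i=1}^k ‖ū_{u,i}‖² = 1 for every vertex u; (b) ⟨ū_{u,i}, ū_{u,j}⟩ = 0 for every vertex u and all i ≠ j; (c) ⟨∑_{i=1}^k ū_{u,i}, I⟩ = 1 for every vertex u; (d) ‖I‖² = 1; and (e) ∑_{(u,v)∈E} ‖ū_{u,i} − ū_{v,i}‖² = 0 for every i ∈ {1,…,k}. -/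
/-!
Write the index `i : Fin (2 * l)` as `j + l * c` with `c : Fin 2`, `j : Fin l`: then
`ū_{u,i} = √(1/l) • e_j` when `c` is the clique of `u`, and `0` otherwise. Hence for each `u`
the vectors `ū_{u,i}` are pairwise orthogonal and sum to `I`, a unit vector, so (a) is
Pythagoras and (c) is `⟪I, I⟫ = 1`. Since `ū_{u,i}` depends only on the clique of `u`, every
edge term in (e) vanishes.
-/
open Finset
open scoped RealInnerProductSpace

/-- The assignment-SDP solution, with `k = 2l`: `ū_{u,i} = √(2/k)·e_i` if `u ∈ C₁` and
`i ≤ k/2`; `ū_{u,i} = √(2/k)·e_{i−k/2}` if `u ∈ C₂` and `i > k/2`; and `ū_{u,i} = 0`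
otherwise. -/
noncomputable def ubarAssign (m l : ℕ) (u : Fin 2 × Fin m) (i : Fin (2 * l)) :
    EuclideanSpace ℝ (Fin l) :=
  if h : u.1 = 0 ∧ (i : ℕ) < l then
    Real.sqrt (2 / (2 * l)) • EuclideanSpace.single ⟨(i : ℕ), h.2⟩ 1
  else if h' : u.1 = 1 ∧ l ≤ (i : ℕ) then
    Real.sqrt (2 / (2 * l)) • EuclideanSpace.single ⟨(i : ℕ) - l, by have := i.isLt; omega⟩ 1
  else 0

/-- The vector `I = √(2/k)·∑_{i=1}^{k/2} e_i`, with `k = 2l`. -/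
noncomputable def Ivec (l : ℕ) : EuclideanSpace ℝ (Fin l) :=
  Real.sqrt (2 / (2 * l)) • ∑ j : Fin l, EuclideanSpace.single j 1

theorem norm_sum_sq_eq_sum_norm_sq_of_pairwise_inner_eq_zero {ι E : Type*} [Fintype ι]
    [NormedAddCommGroup E] [InnerProductSpace ℝ E] {f : ι → E}
    (hf : Pairwise fun i j => ⟪f i, f j⟫ = 0) :
    ‖∑ i, f i‖ ^ 2 = ∑ i, ‖f i‖ ^ 2 := by
  classical
  rw [← real_inner_self_eq_norm_sq, sum_inner]
  refine Finset.sum_congr rfl fun i _ => ?_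
  rw [inner_sum, Finset.sum_eq_single i (fun j _ hji => hf hji.symm) (by simp),
    real_inner_self_eq_norm_sq]

lemma norm_Ivec_sq (l : ℕ) (hl : 1 ≤ l) : ‖Ivec l‖ ^ 2 = 1 := by
  have hl' : (l : ℝ) ≠ 0 := by positivity
  have hsum : ‖∑ j : Fin l, EuclideanSpace.single j (1 : ℝ)‖ ^ 2 = l := by
    rw [norm_sum_sq_eq_sum_norm_sq_of_pairwise_inner_eq_zero
      (fun i j hij => EuclideanSpace.orthonormal_single.2 hij)]
    simp
  rw [Ivec, norm_smul, mul_pow, Real.norm_eq_abs, sq_abs, Real.sq_sqrt (by positivity), hsum]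
  field_simp

lemma ubarAssign_finProdFinEquiv (m l : ℕ) (u : Fin 2 × Fin m) (c : Fin 2) (j : Fin l) :
    ubarAssign m l u (finProdFinEquiv (c, j)) =
      if u.1 = c then Real.sqrt (2 / (2 * l)) • EuclideanSpace.single j 1 else 0 := by
  obtain ⟨a, x⟩ := u
  fin_cases a <;> fin_cases c <;> simp [ubarAssign, finProdFinEquiv]

lemma sum_ubarAssign (m l : ℕ) (u : Fin 2 × Fin m) : ∑ i, ubarAssign m l u i = Ivec l := by
  rw [← finProdFinEquiv.sum_comp, Fintype.sum_prod_type]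
  simp only [ubarAssign_finProdFinEquiv, Finset.sum_ite_irrel, Finset.sum_const_zero,
    Finset.sum_ite_eq, Finset.mem_univ, if_true, Ivec, Finset.smul_sum]

lemma inner_ubarAssign_eq_zero (m l : ℕ) (u : Fin 2 × Fin m) {i i' : Fin (2 * l)}
    (hii' : i ≠ i') : ⟪ubarAssign m l u i, ubarAssign m l u i'⟫ = 0 := by
  obtain ⟨⟨c, j⟩, rfl⟩ := finProdFinEquiv.surjective i
  obtain ⟨⟨c', j'⟩, rfl⟩ := finProdFinEquiv.surjective i'
  rw [ubarAssign_finProdFinEquiv, ubarAssign_finProdFinEquiv]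
  split_ifs with hc hc' <;> try simp only [inner_zero_left, inner_zero_right]
  subst hc hc'
  have hjj' : j ≠ j' := fun h => hii' (by rw [h])
  rw [real_inner_smul_left, real_inner_smul_right, EuclideanSpace.orthonormal_single.2 hjj',
    mul_zero, mul_zero]

lemma ubarAssign_eq_of_fst_eq (m l : ℕ) {u v : Fin 2 × Fin m} (h : u.1 = v.1)
    (i : Fin (2 * l)) :
    ubarAssign m l u i = ubarAssign m l v i := by
  simp only [ubarAssign, h]

theorem stmt17 (m l : ℕ) (hl : 1 ≤ l) :
    -- (a) unit total length
    (∀ u : Fin 2 × Fin m, ∑ i : Fin (2 * l), ‖ubarAssign m l u i‖ ^ 2 = 1) ∧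
    -- (b) orthogonality
    (∀ u : Fin 2 × Fin m, ∀ i j : Fin (2 * l), i ≠ j →
      ⟪ubarAssign m l u i, ubarAssign m l u j⟫ = 0) ∧
    -- (c) ⟨∑ᵢ ū_{u,i}, I⟩ = 1
    (∀ u : Fin 2 × Fin m, ⟪∑ i : Fin (2 * l), ubarAssign m l u i, Ivec l⟫ = 1) ∧
    -- (d) ‖I‖² = 1
    (‖Ivec l‖ ^ 2 = 1) ∧
    -- (e) objective value 0
    (∀ i : Fin (2 * l),
      ∑ e ∈ (twoCliques m).edgeFinset,
        Sym2.lift ⟨fun u v => ‖ubarAssign m l u i - ubarAssign m l v i‖ ^ 2,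
          by intro u v; dsimp only; rw [norm_sub_rev]⟩ e = 0) := by
  refine ⟨fun u => ?_, fun u i j => inner_ubarAssign_eq_zero m l u, fun u => ?_,
    norm_Ivec_sq l hl, fun i => Finset.sum_eq_zero fun e he => ?_⟩
  · rw [← norm_sum_sq_eq_sum_norm_sq_of_pairwise_inner_eq_zero
      (fun i j => inner_ubarAssign_eq_zero m l u), sum_ubarAssign, norm_Ivec_sq l hl]
  · rw [sum_ubarAssign, real_inner_self_eq_norm_sq, norm_Ivec_sq l hl]
  · induction e using Sym2.ind with
    | _ u v =>
      obtain ⟨-, same_clique⟩ : u ≠ v ∧ u.1 = v.1 := SimpleGraph.mem_edgeFinset.1 he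
      simp [ubarAssign_eq_of_fst_eq m l same_clique]
end
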